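/- Fix orthonormal vectors u, v ∈ ℝ^d, an integer R ≥ 2, distinct scalars 0 < μ_1 < … < μ_R, and set m_t := μ_t·u. Let [m] be partitioned into nonempty clusters S_1,…,S_R, let a ∈ ℝ^m be a probability vector with a_i > 0, and suppose for every i ∈ S_t one has x_i = m_t + ξ_i·u with |ξ_i| ≤ ρ for some ρ > 0. For ε > 0 let y_{t,+} = m_t + ε·v and y_{t,−} = m_t − ε·v. Define the coupling P* ∈ ℝ^{m×2R} by P*_{i,(t,+)} = P*_{i,(t,−)} = a_i/2 for i ∈ S_t and all other entries 0, and let A(P*) := Y (P*)ᵀ diag(a)^{−1/2} − X diag(a)^{1/2}, where X, Y have the source and target points as columns. Then: (i) for every i ∈ S_t, the barycentric projection satisfies (1/a_i)∑_{(s,σ)} P*_{i,(s,σ)} y_{s,σ} = m_t; (ii) A(P*) = u γᵀ where γ ∈ ℝ^m has entries γ_i = −ξ_i √(a_i); and (iii) ‖A(P*)‖_{S1} = ‖γ‖₂ and A(P*) has rank at most 1. -/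

import Mathlib

/-!
On a cluster `S t` the two targets `m_t ± ε v` receive equal mass, so the `± ε v` cancel and the
barycentric projection is `m_t`. The `i`-th column of `A(P*)` is `√aᵢ (T xᵢ - xᵢ) = -ξᵢ √aᵢ u`,
so `A(P*) = u γᵀ`. For a rank-one matrix `w vᵀ` the Gram matrix `‖w‖² v vᵀ` has the positive
semidefinite square root `(‖w‖ / ‖v‖) v vᵀ`, whose trace is `‖w‖ ‖v‖`.
-/

open Matrix BigOperators

/-- The nuclear (Schatten-1) norm of a real matrix. -/
noncomputable def nuclearNorm {m n : Type*} [Fintype m] [Fintype n] [DecidableEq n]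
    (M : Matrix m n ℝ) : ℝ :=
  (let hA := (Matrix.posSemidef_conjTranspose_mul_self M).isHermitian
   ((hA.eigenvectorUnitary : Matrix n n ℝ) * Matrix.diagonal ((√·) ∘ hA.eigenvalues) *
     (star hA.eigenvectorUnitary : Matrix n n ℝ))).trace

open scoped MatrixOrder in
theorem nuclearNorm_eq_trace_of_sq_eq {m n : Type*} [Fintype m] [Fintype n] [DecidableEq n]
    {M : Matrix m n ℝ} {N : Matrix n n ℝ} (hN : N.PosSemidef) (hsq : N ^ 2 = Mᴴ * M) :
    nuclearNorm M = N.trace := by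
  have hMM := posSemidef_conjTranspose_mul_self M
  have hsqrt : CFC.sqrt (Mᴴ * M) = N := CFC.sqrt_unique (by rw [← sq, hsq]) hN.nonneg
  rw [CFC.sqrt_eq_cfc, cfc_nnreal_eq_real _ _ hMM.nonneg, hMM.isHermitian.cfc_eq,
    IsHermitian.cfc, Unitary.conjStarAlgAut_apply] at hsqrt
  have hsqrt_eq :
      RCLike.ofReal ∘ (fun x : ℝ => ((NNReal.sqrt x.toNNReal : NNReal) : ℝ)) = (√·) := by
    funext x
    rw [Real.sqrt.eq_1]
    rfl
  rw [← Function.comp_assoc, hsqrt_eq] at hsqrt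
  rw [nuclearNorm, ← hsqrt]

theorem EuclideanSpace.dotProduct_self_eq_norm_sq {n : Type*} [Fintype n]
    (w : EuclideanSpace ℝ n) : w.ofLp ⬝ᵥ w.ofLp = ‖w‖ ^ 2 := by
  rw [← real_inner_self_eq_norm_sq, EuclideanSpace.inner_eq_star_dotProduct, star_trivial]

theorem nuclearNorm_vecMulVec {m n : Type*} [Fintype m] [Fintype n] [DecidableEq n]
    (w : EuclideanSpace ℝ m) (v : EuclideanSpace ℝ n) :
    nuclearNorm (vecMulVec w.ofLp v.ofLp) = ‖w‖ * ‖v‖ := by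
  rcases eq_or_ne v 0 with rfl | hv
  · rw [nuclearNorm_eq_trace_of_sq_eq PosSemidef.zero (by simp)]
    simp
  have hv' : ‖v‖ ≠ 0 := norm_ne_zero_iff.mpr hv
  -- the square root of the Gram matrix `‖w‖² v vᵀ` is `(‖w‖ / ‖v‖) v vᵀ`
  have hN : ((‖w‖ / ‖v‖) • vecMulVec v.ofLp v.ofLp).PosSemidef :=
    (posSemidef_vecMulVec_self_star v.ofLp).smul (by positivity)
  rw [nuclearNorm_eq_trace_of_sq_eq hN, trace_smul, trace_vecMulVec,
    EuclideanSpace.dotProduct_self_eq_norm_sq]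
  · rw [smul_eq_mul]
    field_simp
  · rw [conjTranspose_vecMulVec, sq, smul_mul_smul_comm, vecMulVec_mul_vecMulVec,
      vecMulVec_mul_vecMulVec, star_trivial, star_trivial,
      EuclideanSpace.dotProduct_self_eq_norm_sq, EuclideanSpace.dotProduct_self_eq_norm_sq,
      ← vecMulVec_smul, smul_smul]
    congr 2
    field_simp

section EqualSplitCoupling

variable {ι τ κ n : Type*} [Fintype τ] [Fintype κ]

theorem sum_equalSplit_smul {E : Type*} [AddCommGroup E] [Module ℝ E] {S : τ → Finset ι}
    (hSdisj : ∀ s t, s ≠ t → Disjoint (S s) (S t)) {P : Matrix ι (τ × Bool) ℝ} {a : ι → ℝ}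
    (hPin : ∀ t σ, ∀ i ∈ S t, P i (t, σ) = a i / 2)
    (hPout : ∀ i t σ, i ∉ S t → P i (t, σ) = 0) (y : τ × Bool → E) {t : τ} {i : ι}
    (hi : i ∈ S t) :
    ∑ p, P i p • y p = (a i / 2) • (y (t, true) + y (t, false)) := by
  rw [Fintype.sum_prod_type, Finset.sum_eq_single t, Fintype.sum_bool, hPin t true i hi,
    hPin t false i hi, smul_add]
  · intro s _ hst
    have hs : i ∉ S s := fun hs => Finset.disjoint_left.mp (hSdisj s t hst) hs hi
    simp [hPout i s _ hs]
  · simp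

theorem mul_transpose_apply_eq_sum_smul {Y : Matrix n κ ℝ} {y : κ → EuclideanSpace ℝ n}
    (hY : ∀ k p, Y k p = y p k) (P : Matrix ι κ ℝ) (k : n) (i : ι) :
    (Y * Pᵀ) k i = (∑ p, P i p • y p) k := by
  simp [mul_apply, hY, mul_comm]

theorem weightedDisplacement_apply [DecidableEq ι] [Fintype ι] {X : Matrix n ι ℝ}
    {x : ι → EuclideanSpace ℝ n} (hX : ∀ k i, X k i = x i k) {Y : Matrix n κ ℝ}
    {y : κ → EuclideanSpace ℝ n} (hY : ∀ k p, Y k p = y p k) (P : Matrix ι κ ℝ) {a : ι → ℝ}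
    {i : ι} (ha : 0 < a i) (k : n) :
    (Y * Pᵀ * diagonal (fun i => (√(a i))⁻¹) - X * diagonal (fun i => √(a i))) k i
      = √(a i) * ((a i)⁻¹ • ∑ p, P i p • y p - x i) k := by
  have hsqrt_inv : √(a i) * (a i)⁻¹ = (√(a i))⁻¹ := by
    have := Real.sqrt_pos.mpr ha
    field_simp
    exact Real.sq_sqrt ha.le
  rw [Matrix.sub_apply, mul_diagonal, mul_diagonal, mul_transpose_apply_eq_sum_smul hY, hX]
  simp only [PiLp.sub_apply, PiLp.smul_apply, smul_eq_mul]
  rw [mul_sub, ← mul_assoc, hsqrt_inv]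
  ring

end EqualSplitCoupling

theorem equal_split_coupling_rank_one_displacement_general
    {d m R : ℕ}
    (u v : EuclideanSpace ℝ (Fin d)) (hu : ‖u‖ = 1)
    (μ : Fin R → ℝ)
    (S : Fin R → Finset (Fin m))
    (hSdisj : ∀ s t, s ≠ t → Disjoint (S s) (S t))
    (hScover : ∀ i, ∃ t, i ∈ S t)
    (a : Fin m → ℝ) (ha : ∀ i, 0 < a i)
    (x : Fin m → EuclideanSpace ℝ (Fin d)) (ξ : Fin m → ℝ)
    (hx : ∀ t, ∀ i ∈ S t, x i = μ t • u + ξ i • u)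
    (ε : ℝ)
    (y : Fin R × Bool → EuclideanSpace ℝ (Fin d))
    (hy : ∀ t σ, y (t, σ) = μ t • u + (if σ then ε else -ε) • v)
    -- the equal-split coupling P*
    (Pstar : Matrix (Fin m) (Fin R × Bool) ℝ)
    (hPin : ∀ t σ, ∀ i ∈ S t, Pstar i (t, σ) = a i / 2)
    (hPout : ∀ i t σ, i ∉ S t → Pstar i (t, σ) = 0)
    -- the matrices X, Y of source and target points and the weighted displacement map A
    (X : Matrix (Fin d) (Fin m) ℝ) (hX : ∀ k i, X k i = x i k)
    (Y : Matrix (Fin d) (Fin R × Bool) ℝ) (hY : ∀ k p, Y k p = y p k)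
    (APstar : Matrix (Fin d) (Fin m) ℝ)
    (hAPstar : APstar = Y * Pstarᵀ * Matrix.diagonal (fun i => (Real.sqrt (a i))⁻¹)
        - X * Matrix.diagonal (fun i => Real.sqrt (a i)))
    (γ : EuclideanSpace ℝ (Fin m)) (hγ : ∀ i, γ i = -(ξ i) * Real.sqrt (a i)) :
    (∀ t, ∀ i ∈ S t, (a i)⁻¹ • ∑ p : Fin R × Bool, Pstar i p • y p = μ t • u) ∧
    APstar = Matrix.of (fun k i => u k * γ i) ∧
    nuclearNorm APstar = ‖γ‖ ∧
    APstar.rank ≤ 1 := by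
  have hbary : ∀ t, ∀ i ∈ S t, (a i)⁻¹ • ∑ p, Pstar i p • y p = μ t • u := by
    intro t i hi
    have hai : (a i)⁻¹ * (a i / 2) = 1 / 2 := by field_simp [(ha i).ne']
    rw [sum_equalSplit_smul hSdisj hPin hPout y hi, hy, hy, smul_smul, hai]
    simp only [if_true, Bool.false_eq_true, if_false]
    module
  have hA : APstar = vecMulVec u.ofLp γ.ofLp := by
    ext k i
    obtain ⟨t, hi⟩ := hScover i
    rw [hAPstar, weightedDisplacement_apply hX hY Pstar (ha i), hbary t i hi, hx t i hi,
      vecMulVec_apply, hγ]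
    simp only [PiLp.sub_apply, PiLp.add_apply, PiLp.smul_apply, smul_eq_mul]
    ring
  refine ⟨hbary, hA, ?_, hA ▸ rank_vecMulVec_le _ _⟩
  rw [hA, nuclearNorm_vecMulVec, hu, one_mul]

/-- The equal-split coupling for symmetric two-target clusters has barycentric projection
`m_t` on each cluster, rank-one weighted displacement matrix `u γᵀ`, and
`‖A(P*)‖_{S1} = ‖γ‖₂`. -/
theorem equal_split_coupling_rank_one_displacement
    {d m R : ℕ} (hR : 2 ≤ R)
    (u v : EuclideanSpace ℝ (Fin d)) (hu : ‖u‖ = 1) (hv : ‖v‖ = 1)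
    (huv : inner ℝ u v = (0 : ℝ))
    (μ : Fin R → ℝ) (hμ0 : ∀ t, 0 < μ t) (hμmono : StrictMono μ)
    (S : Fin R → Finset (Fin m))
    (hSdisj : ∀ s t, s ≠ t → Disjoint (S s) (S t))
    (hScover : ∀ i, ∃ t, i ∈ S t) (hSne : ∀ t, (S t).Nonempty)
    (a : Fin m → ℝ) (ha : ∀ i, 0 < a i) (hasum : ∑ i, a i = 1)
    (ρ : ℝ) (hρ : 0 < ρ)
    (x : Fin m → EuclideanSpace ℝ (Fin d)) (ξ : Fin m → ℝ) (hξ : ∀ i, |ξ i| ≤ ρ)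
    (hx : ∀ t, ∀ i ∈ S t, x i = μ t • u + ξ i • u)
    (ε : ℝ) (hε : 0 < ε)
    (y : Fin R × Bool → EuclideanSpace ℝ (Fin d))
    (hy : ∀ t σ, y (t, σ) = μ t • u + (if σ then ε else -ε) • v)
    -- the equal-split coupling P*
    (Pstar : Matrix (Fin m) (Fin R × Bool) ℝ)
    (hPin : ∀ t σ, ∀ i ∈ S t, Pstar i (t, σ) = a i / 2)
    (hPout : ∀ i t σ, i ∉ S t → Pstar i (t, σ) = 0)
    -- the matrices X, Y of source and target points and the weighted displacement map A
    (X : Matrix (Fin d) (Fin m) ℝ) (hX : ∀ k i, X k i = x i k)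
    (Y : Matrix (Fin d) (Fin R × Bool) ℝ) (hY : ∀ k p, Y k p = y p k)
    (APstar : Matrix (Fin d) (Fin m) ℝ)
    (hAPstar : APstar = Y * Pstarᵀ * Matrix.diagonal (fun i => (Real.sqrt (a i))⁻¹)
        - X * Matrix.diagonal (fun i => Real.sqrt (a i)))
    (γ : EuclideanSpace ℝ (Fin m)) (hγ : ∀ i, γ i = -(ξ i) * Real.sqrt (a i)) :
    (∀ t, ∀ i ∈ S t, (a i)⁻¹ • ∑ p : Fin R × Bool, Pstar i p • y p = μ t • u) ∧
    APstar = Matrix.of (fun k i => u k * γ i) ∧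
    nuclearNorm APstar = ‖γ‖ ∧
    APstar.rank ≤ 1 :=
  equal_split_coupling_rank_one_displacement_general u v hu μ S hSdisj hScover a ha x ξ hx ε y hy
    Pstar hPin hPout X hX Y hY APstar hAPstar γ hγ
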